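/- arXiv:2511.10742 — 4 statements merged into one kernel-verified Lean document; each statement's English description precedes it below -/
import Mathlib

section
/- Let k be an algebraically closed field of characteristic 0 and V a k-vector space of dimension d. Let A ⊆ End_k(V) be a commutative unital k-subalgebra of the form A = k·id_V ⊕ m, where every element of the ideal m is a nilpotent endomorphism. Let μ denote the minimal number of generators of V as a module over A. Then dim_k A ≤ μ·(d − μ) + 1. -/
set_option maxHeartbeats 1000000

open Module

lemma span_singleton_pow_aux {k B : Type*} [Field k] [Ring B] [Algebra k B]
    (x : B) (n : ℕ) : (Submodule.span k {x}) ^ n = Submodule.span k {x ^ n} := by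
  induction n with
  | zero => simpa [pow_zero] using (Submodule.one_eq_span (R := k) (A := B))
  | succ n ih =>
      rw [pow_succ, ih, Submodule.span_mul_span, Set.singleton_mul_singleton, pow_succ]

lemma span_finset_sum_aux {k B : Type*} [Field k] [Ring B] [Algebra k B]
    (T : Finset B) : Submodule.span k (T : Set B) = ∑ t ∈ T, Submodule.span k {t} := by
  classical
  induction T using Finset.induction with
  | empty => simp [Submodule.zero_eq_bot]
  | insert _ _ h =>
      rename_i a T' ih
      rw [Finset.coe_insert, Submodule.span_insert, Finset.sum_insert h, ih,
        Submodule.add_eq_sup]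

lemma submodule_pow_eq_bot_aux {k V : Type*} [Field k] [AddCommGroup V] [Module k V]
    [FiniteDimensional k V] (m : Submodule k (Module.End k V))
    (hnil : ∀ g ∈ m, IsNilpotent g)
    (hc : ∀ f ∈ m, ∀ g ∈ m, f * g = g * f) : ∃ N, m ^ N = ⊥ := by
  classical
  obtain ⟨T, hT⟩ := (IsNoetherian.noetherian m : m.FG)
  have hTm : ∀ t ∈ T, t ∈ m := fun t ht => hT ▸ Submodule.subset_span ht
  have hnil' : IsNilpotent m := by
    rw [← hT, span_finset_sum_aux]
    refine Commute.isNilpotent_sum (R := Submodule k (Module.End k V))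
      (fun t ht => ?_) (fun t t' ht ht' => ?_)
    · obtain ⟨n, hn⟩ := hnil t (hTm t ht)
      exact ⟨n, by rw [span_singleton_pow_aux, hn, Submodule.span_zero_singleton,
        Submodule.zero_eq_bot]⟩
    · show _ * _ = _ * _
      rw [Submodule.span_mul_span, Submodule.span_mul_span, Set.singleton_mul_singleton,
        Set.singleton_mul_singleton, hc t (hTm t ht) t' (hTm t' ht')]
  obtain ⟨N, hN⟩ := hnil'
  exact ⟨N, by rw [hN, Submodule.zero_eq_bot]⟩

/-- The minimal number of generators of `V` as a module over a (unital) subalgebra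
`A ⊆ End_k(V)`: the least cardinality of a finite set `s ⊆ V` such that the `A`-submodule
generated by `s` (equivalently, the `k`-span of `{f u : f ∈ A, u ∈ s}`) is all of `V`. -/
noncomputable def minGenerators (k : Type*) {V : Type*} [Field k] [AddCommGroup V]
    [Module k V] (A : Subalgebra k (Module.End k V)) : ℕ :=
  sInf {n : ℕ | ∃ s : Finset V, s.card = n ∧
    Submodule.span k {w : V | ∃ f ∈ A, ∃ u ∈ s, w = f u} = ⊤}

theorem dim_le_of_local_commutative
    {k V : Type*} [Field k] [IsAlgClosed k] [CharZero k]
    [AddCommGroup V] [Module k V] [FiniteDimensional k V]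
    (A : Subalgebra k (Module.End k V))
    (hcomm : ∀ f ∈ A, ∀ g ∈ A, f * g = g * f)
    (m : Submodule k (Module.End k V))
    (hmA : (m : Set (Module.End k V)) ⊆ (A : Set (Module.End k V)))
    (hnil : ∀ g ∈ m, IsNilpotent g)
    (hideal : ∀ f ∈ A, ∀ g ∈ m, f * g ∈ m)
    (hdecomp : ∀ f ∈ A, ∃ (c : k) (g : Module.End k V),
      g ∈ m ∧ f = c • (1 : Module.End k V) + g)
    (hdisj : ∀ c : k, c • (1 : Module.End k V) ∈ m → c = 0) :
    Module.finrank k A ≤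
      minGenerators k A * (Module.finrank k V - minGenerators k A) + 1 := by
  classical
  set d := Module.finrank k V with hd
  -- the generating-set predicate
  set GS : Set ℕ := {n : ℕ | ∃ s : Finset V, s.card = n ∧
      Submodule.span k {w : V | ∃ f ∈ A, ∃ u ∈ s, w = f u} = ⊤} with hGS
  have hspan_sub : ∀ s : Finset V, Submodule.span k (s : Set V) ≤
      Submodule.span k {w : V | ∃ f ∈ A, ∃ u ∈ s, w = f u} := by
    intro s
    refine Submodule.span_le.mpr fun w hw => Submodule.subset_span ?_
    exact ⟨1, A.one_mem, w, hw, (Module.End.one_apply w).symm⟩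
  have hne : GS.Nonempty := by
    obtain ⟨s, hs⟩ := Module.finite_def.mp ‹Module.Finite k V›
    exact ⟨s.card, s, rfl, top_unique (hs ▸ hspan_sub s)⟩
  have hμmem : minGenerators k A ∈ GS := Nat.sInf_mem hne
  set μ := minGenerators k A with hμ
  obtain ⟨s, hcard, hsgen⟩ := hμmem
  -- the filtration  Wn n = (m^n) V
  set Wn : ℕ → Submodule k V := fun n =>
    Submodule.span k {x : V | ∃ F ∈ m ^ n, ∃ v : V, x = F v} with hWn
  -- Step A : m injects into s → Wn 1
  have hker : ∀ F : Module.End k V, F ∈ m → (∀ u ∈ s, F u = 0) → F = 0 := by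
    intro F hF h0
    ext v
    have hv : v ∈ Submodule.span k {w : V | ∃ f ∈ A, ∃ u ∈ s, w = f u} := hsgen ▸ trivial
    simp only [LinearMap.zero_apply]
    induction hv using Submodule.span_induction with
    | mem w hw =>
        obtain ⟨g, hg, u, hu, rfl⟩ := hw
        have hcg : F * g = g * F := hcomm F (hmA hF) g hg
        calc F (g u) = (F * g) u := rfl
          _ = (g * F) u := by rw [hcg]
          _ = g (F u) := rfl
          _ = 0 := by rw [h0 u hu, map_zero]
    | zero => simp
    | add x y _ _ hx hy => rw [map_add, hx, hy, add_zero]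
    | smul c x _ hx => rw [map_smul, hx, smul_zero]
  let Φ : m →ₗ[k] (↥s → ↥(Wn 1)) :=
    { toFun := fun F u => ⟨F.1 u.1,
        Submodule.subset_span ⟨F.1, by rw [Submodule.pow_one]; exact F.2, u.1, rfl⟩⟩
      map_add' := by intro F G; funext u; ext; rfl
      map_smul' := by intro c F; funext u; ext; rfl }
  have hΦinj : Function.Injective Φ := by
    intro F G hFG
    ext1
    have h : ∀ u ∈ s, (F.1 - G.1) u = 0 := by
      intro u hu
      have := congrFun hFG ⟨u, hu⟩
      have h2 : F.1 u = G.1 u := congrArg Subtype.val this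
      simp [LinearMap.sub_apply, h2]
    have := hker (F.1 - G.1) (sub_mem F.2 G.2) h
    have := sub_eq_zero.mp this
    exact this
  have hrank_m : Module.finrank k m ≤ μ * Module.finrank k (Wn 1) := by
    have h1 := LinearMap.finrank_le_finrank_of_injective hΦinj
    have h2 : Module.finrank k (↥s → ↥(Wn 1)) = s.card * Module.finrank k (Wn 1) := by
      rw [Module.finrank_pi_fintype, Finset.sum_const, Finset.card_univ, Fintype.card_coe,
        smul_eq_mul]
    rw [h2, hcard] at h1
    exact h1
  -- nilpotency
  obtain ⟨N, hN⟩ := submodule_pow_eq_bot_aux m hnil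
    (fun f hf g hg => hcomm f (hmA hf) g (hmA hg))
  -- Step C : finrank (Wn 1) ≤ d - μ
  obtain ⟨c, hcompl⟩ := Submodule.exists_isCompl (Wn 1)
  let b := Module.finBasis k ↥c
  let t : Finset V := Finset.image (fun i => (b i : V)) Finset.univ
  have hspan_t : c ≤ Submodule.span k (t : Set V) := by
    have h1 : Submodule.span k (Set.range fun i => ((b i : V))) = c := by
      have h2 := b.span_eq
      have : (Set.range fun i => ((b i : V))) = c.subtype '' Set.range b := by
        rw [← Set.range_comp]; rfl
      rw [this, ← Submodule.map_span, h2, Submodule.map_top, Submodule.range_subtype]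
    intro x hx
    rw [← h1] at hx
    refine Submodule.span_mono ?_ hx
    intro y hy
    obtain ⟨i, rfl⟩ := hy
    exact Finset.mem_coe.mpr (Finset.mem_image.mpr ⟨i, Finset.mem_univ i, rfl⟩)
  set U : Submodule k V :=
    Submodule.span k {w : V | ∃ f ∈ A, ∃ u ∈ t, w = f u} with hU
  have hUstab : ∀ F ∈ A, ∀ x ∈ U, F x ∈ U := by
    intro F hF x hx
    have hmap : Submodule.map F U ≤ U := by
      rw [hU, Submodule.map_span]
      refine Submodule.span_le.mpr ?_
      rintro y ⟨w, ⟨g, hg, u, hu, rfl⟩, rfl⟩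
      exact Submodule.subset_span ⟨F * g, A.mul_mem hF hg, u, hu, rfl⟩
    exact hmap (Submodule.mem_map_of_mem hx)
  have hmul : ∀ n, ∀ F ∈ m, ∀ G ∈ m ^ n, F * G ∈ m ^ (n + 1) := by
    intro n
    induction n with
    | zero =>
        intro F hF G hG
        rw [Submodule.pow_zero] at hG
        obtain ⟨r, rfl⟩ := Submodule.mem_one.mp hG
        have h1 : F * (algebraMap k (Module.End k V)) r = r • F := by
          rw [Algebra.algebraMap_eq_smul_one, mul_smul_comm, mul_one]
        rw [h1]
        show r • F ∈ m ^ 1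
        rw [Submodule.pow_one]
        exact Submodule.smul_mem m r hF
    | succ n ih =>
        intro F hF G hG
        rw [Submodule.pow_succ] at hG
        refine Submodule.mul_induction_on hG ?_ ?_
        · intro g1 hg1 g2 hg2
          rw [← mul_assoc]
          exact Submodule.mul_mem_mul (ih F hF g1 hg1) hg2
        · intro x y hx hy
          rw [mul_add]
          exact add_mem hx hy
  have hWstep : ∀ F ∈ m, ∀ n, ∀ x ∈ Wn n, F x ∈ Wn (n + 1) := by
    intro F hF n x hx
    have hmap : Submodule.map F (Wn n) ≤ Wn (n + 1) := by
      rw [hWn, Submodule.map_span]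
      refine Submodule.span_le.mpr ?_
      rintro y ⟨w, ⟨G, hG, v, rfl⟩, rfl⟩
      exact Submodule.subset_span ⟨F * G, hmul n F hF G hG, v, rfl⟩
    exact hmap (Submodule.mem_map_of_mem hx)
  have hbase : U ⊔ Wn 1 = ⊤ := by
    rw [eq_top_iff, ← hcompl.sup_eq_top]
    exact sup_le le_sup_right (le_trans (le_trans hspan_t (hspan_sub t)) le_sup_left)
  have hind : ∀ n, U ⊔ Wn n = ⊤ := by
    intro n
    induction n with
    | zero =>
        have : Wn 0 = ⊤ := by
          rw [eq_top_iff]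
          intro v _
          exact Submodule.subset_span ⟨1, by rw [Submodule.pow_zero]; exact Submodule.one_le.mp le_rfl,
            v, (Module.End.one_apply v).symm⟩
        rw [this, sup_top_eq]
    | succ n ih =>
        rw [eq_top_iff, ← hbase]
        refine sup_le le_sup_left ?_
        refine Submodule.span_le.mpr ?_
        rintro x ⟨F, hF, v, rfl⟩
        rw [Submodule.pow_one] at hF
        have hv : v ∈ U ⊔ Wn n := ih ▸ trivial
        obtain ⟨u, hu, w, hw, rfl⟩ := Submodule.mem_sup.mp hv
        rw [map_add]
        exact add_mem (Submodule.mem_sup_left (hUstab F (hmA hF) u hu))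
          (Submodule.mem_sup_right (hWstep F hF n w hw))
  have hWN : Wn N = ⊥ := by
    rw [hWn, eq_bot_iff]
    refine Submodule.span_le.mpr ?_
    rintro x ⟨F, hF, v, rfl⟩
    rw [hN] at hF
    rw [(Submodule.mem_bot k).mp hF]
    simp
  have hUtop : U = ⊤ := by
    have := hind N
    rwa [hWN, sup_bot_eq] at this
  have hμt : μ ≤ t.card := Nat.sInf_le ⟨t, rfl, hUtop⟩
  have ht_le : t.card ≤ Module.finrank k c := by
    calc t.card ≤ Finset.univ.card := Finset.card_image_le
      _ = Module.finrank k c := by rw [Finset.card_univ, Fintype.card_fin]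
  have hcrank : Module.finrank k c + Module.finrank k (Wn 1) = d :=
    Submodule.finrank_add_eq_of_isCompl hcompl.symm
  have hW1le : Module.finrank k (Wn 1) ≤ d - μ := by
    have hμc : μ ≤ Module.finrank k c := le_trans hμt ht_le
    omega
  -- Step B : finrank A ≤ finrank m + 1
  have hA_le : Subalgebra.toSubmodule A ≤ m ⊔ Submodule.span k {(1 : Module.End k V)} := by
    intro F hF
    obtain ⟨cc, g, hg, rfl⟩ := hdecomp F hF
    exact add_mem
      (Submodule.mem_sup_right (Submodule.smul_mem _ _ (Submodule.subset_span rfl)))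
      (Submodule.mem_sup_left hg)
  have hrankA : Module.finrank k A ≤ Module.finrank k m + 1 := by
    have h1 : Module.finrank k A =
        Module.finrank k (Subalgebra.toSubmodule A) := (Subalgebra.finrank_toSubmodule A).symm
    have h2 : Module.finrank k (Subalgebra.toSubmodule A) ≤
        Module.finrank k (m ⊔ Submodule.span k {(1 : Module.End k V)} :
          Submodule k (Module.End k V)) := Submodule.finrank_mono hA_le
    have h3 := Submodule.finrank_sup_add_finrank_inf_eq m
      (Submodule.span k {(1 : Module.End k V)})
    have h4 : Module.finrank k (Submodule.span k {(1 : Module.End k V)}) ≤ 1 := by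
      have := finrank_span_le_card (R := k) ({(1 : Module.End k V)} : Set (Module.End k V))
      simpa using this
    omega
  calc Module.finrank k A ≤ Module.finrank k m + 1 := hrankA
    _ ≤ μ * Module.finrank k (Wn 1) + 1 := by omega
    _ ≤ μ * (d - μ) + 1 := by
        have := Nat.mul_le_mul_left μ hW1le
        omega
end

section
/- Let k be a field, V a finite-dimensional k-vector space, and r ≥ 1 an integer. Suppose A ⊆ End_k(V) is a commutative r-spanning k-subspace of maximal dimension, i.e., every commutative r-spanning subspace B ⊆ End_k(V) satisfies dim_k B ≤ dim_k A. Then A contains id_V and is closed under composition; equivalently, A equals the unital subalgebra of End_k(V) that it generates. -/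
/-!
The unital subalgebra generated by a commutative subspace `A` is again commutative, and it is
`r`-spanning with the same witness `U` because it contains `A`. Maximality of `dim A` then forces
it to equal `A`.
-/

/-- A set `A` of endomorphisms of `V` is `r`-spanning if there exists a subspace `U ⊆ V`
with `dim U ≤ r` such that `V` is spanned by `{f u : f ∈ A, u ∈ U}`. -/
def IsRSpanning (k : Type*) {V : Type*} [Field k] [AddCommGroup V] [Module k V]
    (A : Set (Module.End k V)) (r : ℕ) : Prop :=
  ∃ U : Submodule k V, Module.finrank k U ≤ r ∧
    Submodule.span k {w : V | ∃ f ∈ A, ∃ u ∈ U, w = f u} = ⊤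

theorem IsRSpanning.mono {k V : Type*} [Field k] [AddCommGroup V] [Module k V]
    {A B : Set (Module.End k V)} {r : ℕ} (hAB : A ⊆ B) (hA : IsRSpanning k A r) :
    IsRSpanning k B r := by
  obtain ⟨U, hU, hUspan⟩ := hA
  refine ⟨U, hU, eq_top_iff.2 (hUspan ▸ Submodule.span_mono ?_)⟩
  rintro w ⟨f, hf, u, hu, rfl⟩
  exact ⟨f, hAB hf, u, hu, rfl⟩

theorem Algebra.mul_comm_of_mem_adjoin {R A : Type*} [CommSemiring R] [Semiring A] [Algebra R A]
    {s : Set A} (hcomm : ∀ x ∈ s, ∀ y ∈ s, x * y = y * x) {x y : A}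
    (hx : x ∈ adjoin R s) (hy : y ∈ adjoin R s) : x * y = y * x :=
  Set.centralizer_centralizer_comm_of_comm hcomm
    _ (adjoin_le_centralizer_centralizer R s hx) _ (adjoin_le_centralizer_centralizer R s hy)

theorem maximal_commutative_rSpanning_isSubalgebra_general
    {k V : Type*} [Field k] [AddCommGroup V] [Module k V] [FiniteDimensional k V]
    (r : ℕ)
    (A : Submodule k (Module.End k V))
    (hcomm : ∀ f ∈ A, ∀ g ∈ A, f * g = g * f)
    (hspan : IsRSpanning k (A : Set (Module.End k V)) r)
    (hmax : ∀ B : Submodule k (Module.End k V),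
      (∀ f ∈ B, ∀ g ∈ B, f * g = g * f) →
      IsRSpanning k (B : Set (Module.End k V)) r →
      Module.finrank k B ≤ Module.finrank k A) :
    (1 : Module.End k V) ∈ A ∧ ∀ f ∈ A, ∀ g ∈ A, f * g ∈ A := by
  set S := Algebra.adjoin k (A : Set (Module.End k V))
  have hAS : A ≤ Subalgebra.toSubmodule S := fun _ hf => Algebra.subset_adjoin hf
  have hA_eq : A = Subalgebra.toSubmodule S :=
    Submodule.eq_of_le_of_finrank_le hAS <| hmax _
      (fun _ hf _ hg => Algebra.mul_comm_of_mem_adjoin hcomm hf hg) (hspan.mono hAS)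
  rw [hA_eq]
  exact ⟨S.one_mem, fun _ hf _ hg => S.mul_mem hf hg⟩

theorem maximal_commutative_rSpanning_isSubalgebra
    {k V : Type*} [Field k] [AddCommGroup V] [Module k V] [FiniteDimensional k V]
    (r : ℕ) (hr : 1 ≤ r)
    (A : Submodule k (Module.End k V))
    (hcomm : ∀ f ∈ A, ∀ g ∈ A, f * g = g * f)
    (hspan : IsRSpanning k (A : Set (Module.End k V)) r)
    (hmax : ∀ B : Submodule k (Module.End k V),
      (∀ f ∈ B, ∀ g ∈ B, f * g = g * f) →
      IsRSpanning k (B : Set (Module.End k V)) r →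
      Module.finrank k B ≤ Module.finrank k A) :
    (1 : Module.End k V) ∈ A ∧ ∀ f ∈ A, ∀ g ∈ A, f * g ∈ A :=
  maximal_commutative_rSpanning_isSubalgebra_general r A hcomm hspan hmax
end

section
/- Let k be an algebraically closed field and let A be a commutative k-subspace of the algebra M₂(k) of 2×2 matrices which is r-spanning for r = 1 or r = 2 (with respect to V = k²). Then dim_k A ≤ 2, and if dim_k A = 2 then there exists an invertible matrix P ∈ GL₂(k) such that P⁻¹·A·P is either the subspace of all diagonal 2×2 matrices, or the subspace {[[a, b], [0, a]] : a, b ∈ k} of upper triangular matrices with equal diagonal entries. -/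
/-!
Modulo scalars, the commutator of two `2 × 2` matrices is the cross product of their coordinates
`(b, c, a - d)` (for `!![a, b; c, d]`), so the centralizer of a non-scalar matrix `M` is
`span {1, M}`. Hence a commutative subspace is either scalar or contained in `span {1, M}`, and
has dimension at most 2. In dimension 2 it equals `span {1, N}` with `N = λ - M` for an
eigenvalue `λ` of `M`; such a nonzero singular `N` is conjugate to `diag (0, tr N)` when
`tr N ≠ 0` and to the nilpotent Jordan block when `tr N = 0`, and `span {1, ·}` of these are the
two normal forms.
-/

/-- A set `A` of `2 × 2` matrices over `k` is `r`-spanning if there exists a subspace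
`U ⊆ k²` with `dim U ≤ r` such that `k²` is spanned by `{M ⬝ u : M ∈ A, u ∈ U}`. -/
def IsRSpanningMat (k : Type*) [Field k] (A : Set (Matrix (Fin 2) (Fin 2) k))
    (r : ℕ) : Prop :=
  ∃ U : Submodule k (Fin 2 → k), Module.finrank k U ≤ r ∧
    Submodule.span k {w : Fin 2 → k | ∃ M ∈ A, ∃ u ∈ U, w = M.mulVec u} = ⊤

lemma Submodule.finrank_span_pair_le_two {K V : Type*} [DivisionRing K] [AddCommGroup V]
    [Module K V] (x y : V) : Module.finrank K (span K {x, y}) ≤ 2 := by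
  classical
  have := (finrank_span_finset_le_card (R := K) ({x, y} : Finset V)).trans Finset.card_le_two
  rwa [Set.finrank, Finset.coe_pair] at this

namespace Matrix

section CommRing

variable {R : Type*} [CommRing R]

def coordsModScalar (M : Matrix (Fin 2) (Fin 2) R) : Fin 3 → R :=
  ![M 0 1, M 1 0, M 0 0 - M 1 1]

lemma coordsModScalar_eq_zero_iff {M : Matrix (Fin 2) (Fin 2) R} :
    coordsModScalar M = 0 ↔ M ∈ R ∙ 1 := by
  rw [Submodule.mem_span_singleton]
  constructor
  · intro h
    have h0 := congrFun h 0
    have h1 := congrFun h 1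
    have h2 := congrFun h 2
    simp only [coordsModScalar, Pi.zero_apply, cons_val_zero, cons_val_one, cons_val_two,
      head_cons, tail_cons] at h0 h1 h2
    refine ⟨M 1 1, ?_⟩
    ext i j
    fin_cases i <;> fin_cases j <;> simp [h0, h1]
    linear_combination -h2
  · rintro ⟨c, rfl⟩
    ext i
    fin_cases i <;> simp [coordsModScalar]

lemma cross_coordsModScalar (M N : Matrix (Fin 2) (Fin 2) R) :
    coordsModScalar M ⨯₃ coordsModScalar N =
      ![(M * N - N * M) 1 0, (M * N - N * M) 0 1, (M * N - N * M) 0 0] := by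
  ext i
  fin_cases i <;> simp [coordsModScalar, cross_apply, mul_apply] <;> ring

lemma exists_mulVec_ne_zero {m n : Type*} [Fintype n] {N : Matrix m n R} (hN : N ≠ 0) :
    ∃ w, N *ᵥ w ≠ 0 := by
  by_contra! h
  exact hN (mulVec_injective (funext fun w => by simp [h]))

lemma mul_self_eq_trace_smul_sub_det_smul [Nontrivial R] (N : Matrix (Fin 2) (Fin 2) R) :
    N * N = N.trace • N - N.det • 1 := by
  have := N.aeval_self_charpoly
  rw [charpoly_fin_two] at this
  simp only [map_sub, map_add, Polynomial.aeval_X, Polynomial.aeval_C, map_mul, sq,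
    Algebra.algebraMap_eq_smul_one, smul_one_mul] at this
  rw [← sub_eq_zero, ← this]
  abel

lemma image_conj_span_one_pair {n : Type*} [Fintype n] [DecidableEq n] {P : Matrix n n R}
    (hP : IsUnit P) (N : Matrix n n R) :
    (fun X => P⁻¹ * X * P) '' (Submodule.span R {1, N} : Set (Matrix n n R)) =
      Submodule.span R {1, P⁻¹ * N * P} := by
  let conj := LinearMap.mulRight R P ∘ₗ LinearMap.mulLeft R P⁻¹
  change conj '' _ = _
  rw [← Submodule.map_coe, Submodule.map_span, Set.image_pair]
  simp [conj, nonsing_inv_mul P ((isUnit_iff_isUnit_det P).mp hP)]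

lemma coe_span_one_nilpotent :
    (Submodule.span R {1, !![(0 : R), 1; 0, 0]} : Set (Matrix (Fin 2) (Fin 2) R)) =
      {M | M 1 0 = 0 ∧ M 0 0 = M 1 1} := by
  ext M
  simp only [SetLike.mem_coe, Submodule.mem_span_pair]
  constructor
  · rintro ⟨a, b, rfl⟩
    simp
  · rintro ⟨h10, hdiag⟩
    refine ⟨M 0 0, M 0 1, ?_⟩
    ext i j
    fin_cases i <;> fin_cases j <;> simp [h10, hdiag]

end CommRing

section Field

variable {k : Type*} [Field k]

lemma mem_span_one_pair_of_commute {M N : Matrix (Fin 2) (Fin 2) k} (hM : M ∉ k ∙ 1)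
    (h : Commute M N) : N ∈ Submodule.span k {1, M} := by
  have hx : coordsModScalar M ≠ 0 := mt coordsModScalar_eq_zero_iff.mp hM
  have hcross : coordsModScalar M ⨯₃ coordsModScalar N = 0 := by
    rw [cross_coordsModScalar, h.eq, sub_self]
    simp
  obtain ⟨β, hβ⟩ : ∃ β : k, β • coordsModScalar M = coordsModScalar N := by
    by_contra! hne
    exact crossProduct_ne_zero_iff_linearIndependent.mpr
      ((LinearIndependent.pair_iff' hx).mpr hne) hcross
  have h0 := congrFun hβ 0
  have h1 := congrFun hβ 1
  have h2 := congrFun hβ 2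
  simp only [coordsModScalar, Pi.smul_apply, smul_eq_mul, cons_val_zero, cons_val_one,
    cons_val_two, head_cons, tail_cons] at h0 h1 h2
  refine Submodule.mem_span_pair.mpr ⟨N 1 1 - β * M 1 1, β, ?_⟩
  ext i j
  fin_cases i <;> fin_cases j <;> simp [← h0, ← h1]
  linear_combination h2

lemma exists_det_smul_one_sub_eq_zero [IsAlgClosed k] {n : Type*} [Fintype n] [DecidableEq n]
    [Nonempty n] (M : Matrix n n k) : ∃ l : k, (l • 1 - M).det = 0 := by
  obtain ⟨l, hl⟩ := spectrum.nonempty_of_isAlgClosed_of_finiteDimensional k M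
  refine ⟨l, ?_⟩
  have := (mem_spectrum_iff_isRoot_charpoly.mp hl)
  rwa [Polynomial.IsRoot, eval_charpoly, scalar_apply, ← smul_one_eq_diagonal] at this

lemma exists_conj_eq_of_mulVec {N T : Matrix (Fin 2) (Fin 2) k} {v u : Fin 2 → k}
    (hvu : LinearIndependent k ![v, u]) (hv : N *ᵥ v = T 0 0 • v + T 1 0 • u)
    (hu : N *ᵥ u = T 0 1 • v + T 1 1 • u) : ∃ P, IsUnit P ∧ P⁻¹ * N * P = T := by
  let P : Matrix (Fin 2) (Fin 2) k := of fun i j => ![v, u] j i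
  have hP : IsUnit P := linearIndependent_cols_iff_isUnit.mp hvu
  refine ⟨P, hP, ?_⟩
  have hNP : N * P = P * T := by
    ext i j
    fin_cases j
    · simpa [P, mul_apply, mulVec, dotProduct, add_comm, mul_comm] using congrFun hv i
    · simpa [P, mul_apply, mulVec, dotProduct, add_comm, mul_comm] using congrFun hu i
  rw [mul_assoc, hNP, ← mul_assoc, nonsing_inv_mul P ((isUnit_iff_isUnit_det P).mp hP), one_mul]

lemma linearIndependent_pair_of_mulVec {N : Matrix (Fin 2) (Fin 2) k} {x y : Fin 2 → k}
    (hx0 : x ≠ 0) (hx : N *ᵥ x = 0) (hy : N *ᵥ y ≠ 0) : LinearIndependent k ![x, y] := by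
  refine LinearIndependent.pair_iff.mpr fun s t hst => ?_
  have ht : t = 0 := by
    have := congrArg (N *ᵥ ·) hst
    simp only [mulVec_add, mulVec_smul, hx, smul_zero, zero_add, mulVec_zero] at this
    exact (smul_eq_zero.mp this).resolve_right hy
  subst ht
  rw [zero_smul, add_zero] at hst
  exact ⟨(smul_eq_zero.mp hst).resolve_right hx0, rfl⟩

lemma exists_conj_eq_diagonal {N : Matrix (Fin 2) (Fin 2) k} (hdet : N.det = 0)
    (htr : N.trace ≠ 0) : ∃ P, IsUnit P ∧ P⁻¹ * N * P = !![0, 0; 0, N.trace] := by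
  obtain ⟨v, hv0, hv⟩ := exists_mulVec_eq_zero_iff.mpr hdet
  obtain ⟨w, hw⟩ := exists_mulVec_ne_zero (N := N) (by rintro rfl; simp at htr)
  have hu : N *ᵥ (N *ᵥ w) = N.trace • N *ᵥ w := by
    rw [mulVec_mulVec, mul_self_eq_trace_smul_sub_det_smul, hdet, zero_smul, sub_zero, smul_mulVec]
  refine exists_conj_eq_of_mulVec (linearIndependent_pair_of_mulVec hv0 hv ?_)
    (by rw [hv]; simp) (by rw [hu]; simp)
  rw [hu]
  exact smul_ne_zero htr hw

lemma exists_conj_eq_nilpotent {N : Matrix (Fin 2) (Fin 2) k} (hN : N ≠ 0) (hdet : N.det = 0)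
    (htr : N.trace = 0) : ∃ P, IsUnit P ∧ P⁻¹ * N * P = !![0, 1; 0, 0] := by
  obtain ⟨w, hw⟩ := exists_mulVec_ne_zero hN
  have hu : N *ᵥ (N *ᵥ w) = 0 := by
    rw [mulVec_mulVec, mul_self_eq_trace_smul_sub_det_smul, hdet, htr]
    simp
  exact exists_conj_eq_of_mulVec (linearIndependent_pair_of_mulVec hw hu hw)
    (by rw [hu]; simp) (by simp)

lemma coe_span_one_diagonal {t : k} (ht : t ≠ 0) :
    (Submodule.span k {1, !![0, 0; 0, t]} : Set (Matrix (Fin 2) (Fin 2) k)) =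
      {M | M 0 1 = 0 ∧ M 1 0 = 0} := by
  ext M
  simp only [SetLike.mem_coe, Submodule.mem_span_pair]
  constructor
  · rintro ⟨a, b, rfl⟩
    simp
  · rintro ⟨h01, h10⟩
    refine ⟨M 0 0, (M 1 1 - M 0 0) / t, ?_⟩
    ext i j
    fin_cases i <;> fin_cases j <;> simp [h01, h10, div_mul_cancel₀ _ ht]

lemma exists_conj_image_span_one_pair {N : Matrix (Fin 2) (Fin 2) k} (hN : N ≠ 0)
    (hdet : N.det = 0) :
    ∃ P : Matrix (Fin 2) (Fin 2) k, IsUnit P ∧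
      ((fun X => P⁻¹ * X * P) '' (Submodule.span k {1, N} : Set (Matrix (Fin 2) (Fin 2) k)) =
          {M | M 0 1 = 0 ∧ M 1 0 = 0} ∨
        (fun X => P⁻¹ * X * P) '' (Submodule.span k {1, N} : Set (Matrix (Fin 2) (Fin 2) k)) =
          {M | M 1 0 = 0 ∧ M 0 0 = M 1 1}) := by
  rcases ne_or_eq N.trace 0 with htr | htr
  · obtain ⟨P, hP, hPN⟩ := exists_conj_eq_diagonal hdet htr
    exact ⟨P, hP, Or.inl (by rw [image_conj_span_one_pair hP, hPN, coe_span_one_diagonal htr])⟩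
  · obtain ⟨P, hP, hPN⟩ := exists_conj_eq_nilpotent hN hdet htr
    exact ⟨P, hP, Or.inr (by rw [image_conj_span_one_pair hP, hPN, coe_span_one_nilpotent])⟩

end Field

end Matrix

open Matrix Module Submodule

theorem two_by_two_commutative_classification_general
    {k : Type*} [Field k] [IsAlgClosed k]
    (A : Submodule k (Matrix (Fin 2) (Fin 2) k))
    (hcomm : ∀ M ∈ A, ∀ N ∈ A, M * N = N * M) :
    Module.finrank k A ≤ 2 ∧
    (Module.finrank k A = 2 →
      ∃ P : Matrix (Fin 2) (Fin 2) k, IsUnit P ∧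
        ((fun M => P⁻¹ * M * P) '' (A : Set (Matrix (Fin 2) (Fin 2) k)) =
            {M : Matrix (Fin 2) (Fin 2) k | M 0 1 = 0 ∧ M 1 0 = 0} ∨
         (fun M => P⁻¹ * M * P) '' (A : Set (Matrix (Fin 2) (Fin 2) k)) =
            {M : Matrix (Fin 2) (Fin 2) k | M 1 0 = 0 ∧ M 0 0 = M 1 1})) := by
  by_cases hscalar : A ≤ k ∙ 1
  · have h1 : finrank k A ≤ 1 :=
      (finrank_mono hscalar).trans (finrank_span_singleton one_ne_zero).le
    exact ⟨by omega, by omega⟩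
  obtain ⟨M, hMA, hM⟩ := SetLike.not_le_iff_exists.mp hscalar
  obtain ⟨l, hl⟩ := exists_det_smul_one_sub_eq_zero M
  set N := l • 1 - M
  have hN : N ∉ k ∙ 1 := fun h =>
    hM (by simpa [N] using sub_mem (smul_mem _ l (mem_span_singleton_self 1)) h)
  have hAN : A ≤ span k {1, N} := fun X hX => mem_span_one_pair_of_commute hN
    (((Commute.one_left X).smul_left l).sub_left (hcomm M hMA X hX))
  have hspan := finrank_span_pair_le_two (K := k) 1 N
  refine ⟨(finrank_mono hAN).trans hspan, fun hA => ?_⟩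
  rw [eq_of_le_of_finrank_le hAN (hspan.trans hA.ge)]
  exact exists_conj_image_span_one_pair (fun h => hN (h ▸ zero_mem _)) hl

theorem two_by_two_commutative_classification
    {k : Type*} [Field k] [IsAlgClosed k]
    (A : Submodule k (Matrix (Fin 2) (Fin 2) k))
    (hcomm : ∀ M ∈ A, ∀ N ∈ A, M * N = N * M)
    (r : ℕ) (hr : r = 1 ∨ r = 2)
    (hspan : IsRSpanningMat k (A : Set (Matrix (Fin 2) (Fin 2) k)) r) :
    Module.finrank k A ≤ 2 ∧
    (Module.finrank k A = 2 →
      ∃ P : Matrix (Fin 2) (Fin 2) k, IsUnit P ∧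
        ((fun M => P⁻¹ * M * P) '' (A : Set (Matrix (Fin 2) (Fin 2) k)) =
            {M : Matrix (Fin 2) (Fin 2) k | M 0 1 = 0 ∧ M 1 0 = 0} ∨
         (fun M => P⁻¹ * M * P) '' (A : Set (Matrix (Fin 2) (Fin 2) k)) =
            {M : Matrix (Fin 2) (Fin 2) k | M 1 0 = 0 ∧ M 0 0 = M 1 1})) :=
  two_by_two_commutative_classification_general A hcomm
end

section
/- For all integers n ≥ 1 and r ≥ 1, the following identity holds in the polynomial ring ℤ[q]: (q − 1)²·(q + 1)·( Σ_{1 ≤ i < j ≤ r} q^{i+j−2} + Σ_{1 ≤ i < j ≤ r} q^{i+j−3} + Σ_{1 ≤ j < i ≤ r} q^{i+j−1} + Σ_{i=1}^{r} Σ_{k=1}^{n} q^{r+i+k−3} ) = (q^r − 1)·(q^{n+r} + q^{n+r−1} + q^{r+1} − q² − q − 1). -/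
open Polynomial Finset

private lemma key (c : ℤ[X]) (m : ℕ) : (c - 1) * ∑ i ∈ range m, c ^ i = c ^ m - 1 := by
  rw [mul_comm, geom_sum_mul]

private lemma convLt (r : ℕ) (e : ℕ → ℕ → ℕ) :
    ∑ p ∈ (Icc 1 r ×ˢ Icc 1 r).filter (fun p => p.1 < p.2), (X : ℤ[X]) ^ e p.1 p.2
      = ∑ j ∈ range r, ∑ i ∈ range j, (X : ℤ[X]) ^ e (1 + i) (1 + j) := by
  rw [Finset.sum_filter, Finset.sum_product_right, ← Finset.Ico_add_one_right_eq_Icc,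
    Finset.sum_Ico_eq_sum_range]
  refine Finset.sum_congr (by rw [Nat.add_sub_cancel]) fun j hj => ?_
  have hj' : j < r := Finset.mem_range.mp hj
  rw [Finset.sum_Ico_eq_sum_range]
  dsimp only
  rw [← Finset.sum_filter]
  have : (Finset.filter (fun i => 1 + i < 1 + j) (range (r + 1 - 1))) = range j := by
    ext k; simp only [Finset.mem_filter, Finset.mem_range]; omega
  rw [this]

private lemma convGt (r : ℕ) (e : ℕ → ℕ → ℕ) :
    ∑ p ∈ (Icc 1 r ×ˢ Icc 1 r).filter (fun p => p.2 < p.1), (X : ℤ[X]) ^ e p.1 p.2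
      = ∑ i ∈ range r, ∑ j ∈ range i, (X : ℤ[X]) ^ e (1 + i) (1 + j) := by
  rw [Finset.sum_filter, Finset.sum_product, ← Finset.Ico_add_one_right_eq_Icc,
    Finset.sum_Ico_eq_sum_range]
  refine Finset.sum_congr (by rw [Nat.add_sub_cancel]) fun i hi => ?_
  have hi' : i < r := Finset.mem_range.mp hi
  rw [Finset.sum_Ico_eq_sum_range]
  dsimp only
  rw [← Finset.sum_filter]
  have : (Finset.filter (fun j => 1 + j < 1 + i) (range (r + 1 - 1))) = range i := by
    ext k; simp only [Finset.mem_filter, Finset.mem_range]; omega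
  rw [this]

private lemma convRect (r n : ℕ) (e : ℕ → ℕ → ℕ) :
    ∑ i ∈ Icc 1 r, ∑ j ∈ Icc 1 n, (X : ℤ[X]) ^ e i j
      = ∑ i ∈ range r, ∑ j ∈ range n, (X : ℤ[X]) ^ e (1 + i) (1 + j) := by
  rw [← Finset.Ico_add_one_right_eq_Icc, Finset.sum_Ico_eq_sum_range]
  refine Finset.sum_congr (by rw [Nat.add_sub_cancel]) fun i _ => ?_
  rw [← Finset.Ico_add_one_right_eq_Icc, Finset.sum_Ico_eq_sum_range]
  exact Finset.sum_congr (by rw [Nat.add_sub_cancel]) fun j _ => rfl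

private lemma B1 (r : ℕ) :
    ((X : ℤ[X]) - 1) ^ 2 * ((X : ℤ[X]) + 1) * ∑ j ∈ range r, ∑ i ∈ range j, (X : ℤ[X]) ^ (i + j)
      = (((X : ℤ[X]) ^ 2) ^ r - 1) - ((X : ℤ[X]) + 1) * ((X : ℤ[X]) ^ r - 1) := by
  rw [Finset.mul_sum]
  have step : ∀ j ∈ range r,
      ((X : ℤ[X]) - 1) ^ 2 * ((X : ℤ[X]) + 1) * ∑ i ∈ range j, (X : ℤ[X]) ^ (i + j)
        = ((X : ℤ[X]) ^ 2 - 1) * ((X : ℤ[X]) ^ 2) ^ j - ((X : ℤ[X]) ^ 2 - 1) * (X : ℤ[X]) ^ j := by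
    intro j _
    have h : ∑ i ∈ range j, (X : ℤ[X]) ^ (i + j) = (∑ i ∈ range j, (X : ℤ[X]) ^ i) * X ^ j := by
      rw [Finset.sum_mul]
      exact Finset.sum_congr rfl fun i _ => pow_add X i j
    rw [h]
    linear_combination (((X : ℤ[X]) + 1) * ((X : ℤ[X]) - 1) * X ^ j) * key X j
  rw [Finset.sum_congr rfl step, Finset.sum_sub_distrib, ← Finset.mul_sum, ← Finset.mul_sum]
  linear_combination key ((X : ℤ[X]) ^ 2) r - ((X : ℤ[X]) + 1) * key X r

private lemma B2 (a : ℕ) :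
    ((X : ℤ[X]) - 1) ^ 2 * ((X : ℤ[X]) + 1) *
        ∑ t ∈ range a, ∑ i ∈ range (t + 1), (X : ℤ[X]) ^ (i + t)
      = (X : ℤ[X]) * (((X : ℤ[X]) ^ 2) ^ a - 1) - ((X : ℤ[X]) + 1) * ((X : ℤ[X]) ^ a - 1) := by
  rw [Finset.mul_sum]
  have step : ∀ t ∈ range a,
      ((X : ℤ[X]) - 1) ^ 2 * ((X : ℤ[X]) + 1) * ∑ i ∈ range (t + 1), (X : ℤ[X]) ^ (i + t)
        = ((X : ℤ[X]) ^ 2 - 1) * (X : ℤ[X]) * ((X : ℤ[X]) ^ 2) ^ t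
            - ((X : ℤ[X]) ^ 2 - 1) * (X : ℤ[X]) ^ t := by
    intro t _
    have h : ∑ i ∈ range (t + 1), (X : ℤ[X]) ^ (i + t)
        = (∑ i ∈ range (t + 1), (X : ℤ[X]) ^ i) * X ^ t := by
      rw [Finset.sum_mul]
      exact Finset.sum_congr rfl fun i _ => pow_add X i t
    rw [h]
    linear_combination (((X : ℤ[X]) + 1) * ((X : ℤ[X]) - 1) * X ^ t) * key X (t + 1)
  rw [Finset.sum_congr rfl step, Finset.sum_sub_distrib, ← Finset.mul_sum, ← Finset.mul_sum]
  linear_combination (X : ℤ[X]) * key ((X : ℤ[X]) ^ 2) a - ((X : ℤ[X]) + 1) * key X a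

private lemma B3 (r : ℕ) :
    ((X : ℤ[X]) - 1) ^ 2 * ((X : ℤ[X]) + 1) *
        ∑ i ∈ range r, ∑ j ∈ range i, (X : ℤ[X]) ^ (i + j + 1)
      = (X : ℤ[X]) * (((X : ℤ[X]) ^ 2) ^ r - 1)
          - (X : ℤ[X]) * ((X : ℤ[X]) + 1) * ((X : ℤ[X]) ^ r - 1) := by
  rw [Finset.mul_sum]
  have step : ∀ i ∈ range r,
      ((X : ℤ[X]) - 1) ^ 2 * ((X : ℤ[X]) + 1) * ∑ j ∈ range i, (X : ℤ[X]) ^ (i + j + 1)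
        = ((X : ℤ[X]) ^ 2 - 1) * (X : ℤ[X]) * ((X : ℤ[X]) ^ 2) ^ i
            - ((X : ℤ[X]) ^ 2 - 1) * (X : ℤ[X]) * (X : ℤ[X]) ^ i := by
    intro i _
    have h : ∑ j ∈ range i, (X : ℤ[X]) ^ (i + j + 1)
        = (∑ j ∈ range i, (X : ℤ[X]) ^ j) * X ^ (i + 1) := by
      rw [Finset.sum_mul]
      refine Finset.sum_congr rfl fun j _ => ?_
      rw [← pow_add]
      congr 1
      omega
    rw [h]
    linear_combination (((X : ℤ[X]) + 1) * ((X : ℤ[X]) - 1) * X ^ (i + 1)) * key X i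
  rw [Finset.sum_congr rfl step, Finset.sum_sub_distrib, ← Finset.mul_sum, ← Finset.mul_sum]
  linear_combination (X : ℤ[X]) * key ((X : ℤ[X]) ^ 2) r
    - (X : ℤ[X]) * ((X : ℤ[X]) + 1) * key X r

private lemma B4 (a n : ℕ) :
    ((X : ℤ[X]) - 1) ^ 2 * ((X : ℤ[X]) + 1) *
        ∑ i ∈ range (a + 1), ∑ j ∈ range n, (X : ℤ[X]) ^ (a + i + j)
      = ((X : ℤ[X]) + 1) * (X : ℤ[X]) ^ a
          * (((X : ℤ[X]) ^ (a + 1) - 1) * ((X : ℤ[X]) ^ n - 1)) := by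
  have h : ∑ i ∈ range (a + 1), ∑ j ∈ range n, (X : ℤ[X]) ^ (a + i + j)
      = (∑ i ∈ range (a + 1), (X : ℤ[X]) ^ i)
          * ((X : ℤ[X]) ^ a * ∑ j ∈ range n, (X : ℤ[X]) ^ j) := by
    rw [Finset.sum_mul]
    refine Finset.sum_congr rfl fun i _ => ?_
    rw [Finset.mul_sum, Finset.mul_sum]
    refine Finset.sum_congr rfl fun j _ => ?_
    rw [← pow_add, ← pow_add]
    congr 1
    omega
  rw [h]
  linear_combination
    (((X : ℤ[X]) + 1) * (X : ℤ[X]) ^ a * (((X : ℤ[X]) - 1) * ∑ j ∈ range n, (X : ℤ[X]) ^ j))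
        * key X (a + 1)
      + (((X : ℤ[X]) + 1) * (X : ℤ[X]) ^ a * ((X : ℤ[X]) ^ (a + 1) - 1)) * key X n

theorem hilbert_poincare_identity (n r : ℕ) (hn : 1 ≤ n) (hr : 1 ≤ r) :
    ((X : ℤ[X]) - 1) ^ 2 * ((X : ℤ[X]) + 1) *
      ((∑ p ∈ (Icc 1 r ×ˢ Icc 1 r).filter (fun p => p.1 < p.2),
          (X : ℤ[X]) ^ (p.1 + p.2 - 2)) +
        (∑ p ∈ (Icc 1 r ×ˢ Icc 1 r).filter (fun p => p.1 < p.2),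
          (X : ℤ[X]) ^ (p.1 + p.2 - 3)) +
        (∑ p ∈ (Icc 1 r ×ˢ Icc 1 r).filter (fun p => p.2 < p.1),
          (X : ℤ[X]) ^ (p.1 + p.2 - 1)) +
        (∑ i ∈ Icc 1 r, ∑ j ∈ Icc 1 n, (X : ℤ[X]) ^ (r + i + j - 3))) =
      ((X : ℤ[X]) ^ r - 1) *
        ((X : ℤ[X]) ^ (n + r) + (X : ℤ[X]) ^ (n + r - 1) + (X : ℤ[X]) ^ (r + 1) -
          (X : ℤ[X]) ^ 2 - (X : ℤ[X]) - 1) := by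
  obtain ⟨a, rfl⟩ : ∃ a, r = a + 1 := ⟨r - 1, by omega⟩
  obtain ⟨b, rfl⟩ : ∃ b, n = b + 1 := ⟨n - 1, by omega⟩
  have E1 : ∑ p ∈ (Icc 1 (a + 1) ×ˢ Icc 1 (a + 1)).filter (fun p => p.1 < p.2),
        (X : ℤ[X]) ^ (p.1 + p.2 - 2)
      = ∑ j ∈ range (a + 1), ∑ i ∈ range j, (X : ℤ[X]) ^ (i + j) := by
    calc ∑ p ∈ (Icc 1 (a + 1) ×ˢ Icc 1 (a + 1)).filter (fun p => p.1 < p.2),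
          (X : ℤ[X]) ^ (p.1 + p.2 - 2)
        = ∑ j ∈ range (a + 1), ∑ i ∈ range j, (X : ℤ[X]) ^ ((1 + i) + (1 + j) - 2) :=
          convLt (a + 1) (fun i j => i + j - 2)
      _ = ∑ j ∈ range (a + 1), ∑ i ∈ range j, (X : ℤ[X]) ^ (i + j) := by
          refine Finset.sum_congr rfl fun j _ => Finset.sum_congr rfl fun i _ => ?_
          congr 1; omega
  have E2 : ∑ p ∈ (Icc 1 (a + 1) ×ˢ Icc 1 (a + 1)).filter (fun p => p.1 < p.2),
        (X : ℤ[X]) ^ (p.1 + p.2 - 3)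
      = ∑ t ∈ range a, ∑ i ∈ range (t + 1), (X : ℤ[X]) ^ (i + t) := by
    calc ∑ p ∈ (Icc 1 (a + 1) ×ˢ Icc 1 (a + 1)).filter (fun p => p.1 < p.2),
          (X : ℤ[X]) ^ (p.1 + p.2 - 3)
        = ∑ j ∈ range (a + 1), ∑ i ∈ range j, (X : ℤ[X]) ^ ((1 + i) + (1 + j) - 3) :=
          convLt (a + 1) (fun i j => i + j - 3)
      _ = (∑ t ∈ range a, ∑ i ∈ range (t + 1), (X : ℤ[X]) ^ ((1 + i) + (1 + (t + 1)) - 3))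
            + ∑ i ∈ range 0, (X : ℤ[X]) ^ ((1 + i) + (1 + 0) - 3) :=
          Finset.sum_range_succ' _ a
      _ = ∑ t ∈ range a, ∑ i ∈ range (t + 1), (X : ℤ[X]) ^ (i + t) := by
          rw [Finset.range_zero, Finset.sum_empty, add_zero]
          refine Finset.sum_congr rfl fun t _ => Finset.sum_congr rfl fun i _ => ?_
          congr 1; omega
  have E3 : ∑ p ∈ (Icc 1 (a + 1) ×ˢ Icc 1 (a + 1)).filter (fun p => p.2 < p.1),
        (X : ℤ[X]) ^ (p.1 + p.2 - 1)
      = ∑ i ∈ range (a + 1), ∑ j ∈ range i, (X : ℤ[X]) ^ (i + j + 1) := by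
    calc ∑ p ∈ (Icc 1 (a + 1) ×ˢ Icc 1 (a + 1)).filter (fun p => p.2 < p.1),
          (X : ℤ[X]) ^ (p.1 + p.2 - 1)
        = ∑ i ∈ range (a + 1), ∑ j ∈ range i, (X : ℤ[X]) ^ ((1 + i) + (1 + j) - 1) :=
          convGt (a + 1) (fun i j => i + j - 1)
      _ = ∑ i ∈ range (a + 1), ∑ j ∈ range i, (X : ℤ[X]) ^ (i + j + 1) := by
          refine Finset.sum_congr rfl fun i _ => Finset.sum_congr rfl fun j _ => ?_
          congr 1; omega
  have E4 : ∑ i ∈ Icc 1 (a + 1), ∑ j ∈ Icc 1 (b + 1), (X : ℤ[X]) ^ ((a + 1) + i + j - 3)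
      = ∑ i ∈ range (a + 1), ∑ j ∈ range (b + 1), (X : ℤ[X]) ^ (a + i + j) := by
    calc ∑ i ∈ Icc 1 (a + 1), ∑ j ∈ Icc 1 (b + 1), (X : ℤ[X]) ^ ((a + 1) + i + j - 3)
        = ∑ i ∈ range (a + 1), ∑ j ∈ range (b + 1),
            (X : ℤ[X]) ^ ((a + 1) + (1 + i) + (1 + j) - 3) :=
          convRect (a + 1) (b + 1) (fun i j => (a + 1) + i + j - 3)
      _ = ∑ i ∈ range (a + 1), ∑ j ∈ range (b + 1), (X : ℤ[X]) ^ (a + i + j) := by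
          refine Finset.sum_congr rfl fun i _ => Finset.sum_congr rfl fun j _ => ?_
          congr 1; omega
  rw [E1, E2, E3, E4, show b + 1 + (a + 1) - 1 = a + b + 1 by omega]
  linear_combination B1 (a + 1) + B2 a + B3 (a + 1) + B4 a (b + 1)
end
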